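/- Let θ₁, θ₂ ∈ [0, 2π). Suppose Ψ = (ψ_{ς₀ς₁ς₂}) is C¹ on [0,∞) × closure(S₁), satisfies the equal-time evolution equations on (0,∞) × S₁ and the exact boundary conditions ψ_{(−1)(+1)ς₂} = e^{iθ₁} ψ_{(+1)(−1)ς₂} on C₁ (for ς₂ = ±1) and ψ_{(+1)ς₁(−1)} = e^{iθ₂} ψ_{(−1)ς₁(+1)} on C₂ (for ς₁ = ±1), and for every bounded time interval has compact spatial support. Then the total probability is conserved: for all t ≥ 0, ∫_{S₁} |Ψ(t, ·)|² = ∫_{S₁} |Ψ(0, ·)|², where |Ψ|² := Σ_{ς₀,ς₁,ς₂} |ψ_{ς₀ς₁ς₂}|². -/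

import Mathlib

open Complex MeasureTheory

noncomputable section

/-- Partial derivative (in coordinate `i`) of a complex-valued function on `ℝⁿ`. -/
def pdC {n : ℕ} (i : Fin n) (f : (Fin n → ℝ) → ℂ) (x : Fin n → ℝ) : ℂ :=
  fderiv ℝ f x (Pi.single i 1)

/-- The spatial domain `S₁ = {(s_ph, s_e1, s_e2) : s_e1 < s_ph < s_e2}`;
coordinates are `p 0 = s_ph`, `p 1 = s_e1`, `p 2 = s_e2`. -/
def S1 : Set (Fin 3 → ℝ) := {p | p 1 < p 0 ∧ p 0 < p 2}

/-- Spacetime point `(t, s_ph, s_e1, s_e2)` from a time `t` and spatial point `p`. -/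
def pt (t : ℝ) (p : Fin 3 → ℝ) : Fin 4 → ℝ := ![t, p 0, p 1, p 2]

/-- The spatial part of a spacetime point. -/
def sp (x : Fin 4 → ℝ) : Fin 3 → ℝ := ![x 1, x 2, x 3]

/-- The probability density `Σ_{ς₀,ς₁,ς₂} |ψ_{ς₀ς₁ς₂}|²` at time `t`, spatial point `p`. -/
def totD (ψ : ℝ → ℝ → ℝ → (Fin 4 → ℝ) → ℂ) (t : ℝ) (p : Fin 3 → ℝ) : ℝ :=
  ∑ ς₀ ∈ ({-1, 1} : Finset ℝ), ∑ ς₁ ∈ ({-1, 1} : Finset ℝ), ∑ ς₂ ∈ ({-1, 1} : Finset ℝ),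
    ‖ψ ς₀ ς₁ ς₂ (pt t p)‖ ^ 2

/-! Each `|ψ_ς|²` is transported along the characteristic direction `(1, -ς₀, -ς₁, -ς₂)`, up to
the mass terms, which couple `ψ_ς` only to the components with one electron sign flipped. Since
multiplication by `iω` is skew for the real inner product on `ℂ`, these terms cancel in pairs and
the spacetime current `Σ_ς |ψ_ς|² (1, -ς₀, -ς₁, -ς₂)` is divergence free on `(0, ∞) × S₁`.

In the coordinates `s_ph = w`, `s_e1 = w - u`, `s_e2 = w + v` the region `(0, ∞) × S₁` becomes an
orthant, and we apply the divergence theorem on a box `[0, t] × [0, A]² × [-A, A]`. The faces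
`u = 0` and `v = 0` lie on `C₁` and `C₂`, where the boundary conditions make the incoming and
outgoing densities equal (`|e^{iθ}| = 1`); the faces at distance `A` carry nothing by compact
support; the time faces give the total probability at times `t` and `0`. -/

local notation "𝕊" => ({-1, 1} : Finset ℝ)

lemma mem_set_of_mem_signs {s : ℝ} (h : s ∈ 𝕊) : s ∈ ({-1, 1} : Set ℝ) := by
  simpa using h

lemma sum_signs {M : Type*} [AddCommMonoid M] (f : ℝ → M) : ∑ s ∈ 𝕊, f s = f (-1) + f 1 :=
  Finset.sum_pair (by norm_num)

lemma sum_signs_eq_zero_of_antisymm (h : ℝ → ℝ → ℝ) (hh : ∀ a b, h a b = -h b a) :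
    ∑ s ∈ 𝕊, h s (-s) = 0 := by
  rw [sum_signs, neg_neg, hh (-1)]
  ring

section Divergence

variable {n : ℕ}

def divergence (f' : (Fin n → ℝ) →L[ℝ] (Fin n → ℝ)) : ℝ := ∑ i, f' (Pi.single i 1) i

lemma divergence_sum {ι : Type*} (s : Finset ι) (f' : ι → (Fin n → ℝ) →L[ℝ] (Fin n → ℝ)) :
    divergence (∑ k ∈ s, f' k) = ∑ k ∈ s, divergence (f' k) := by
  simp only [divergence, _root_.sum_apply, Finset.sum_apply]
  exact Finset.sum_comm

lemma divergence_smulRight (g : (Fin n → ℝ) →L[ℝ] ℝ) (v : Fin n → ℝ) :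
    divergence (g.smulRight v) = g v := by
  conv_rhs => rw [← Finset.univ_sum_single v]
  simp only [divergence, ContinuousLinearMap.smulRight_apply, Pi.smul_apply, smul_eq_mul, map_sum]
  refine Finset.sum_congr rfl fun i _ => ?_
  rw [mul_comm, ← smul_eq_mul, ← map_smul, ← Pi.single_smul', smul_eq_mul, mul_one]

theorem sum_integral_faces_eq_zero_of_divergence_eq_zero {a b : Fin (n + 1) → ℝ}
    (hab : a ≤ b)
    {f : (Fin (n + 1) → ℝ) → Fin (n + 1) → ℝ} (hc : ContinuousOn f (Set.Icc a b))
    (hd : ∀ x ∈ Set.univ.pi fun i => Set.Ioo (a i) (b i), DifferentiableAt ℝ f x)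
    (hdiv : ∀ x ∈ Set.univ.pi fun i => Set.Ioo (a i) (b i), divergence (fderiv ℝ f x) = 0) :
    ∑ i, ((∫ y in Set.Icc (a ∘ i.succAbove) (b ∘ i.succAbove), f (i.insertNth (b i) y) i) -
      ∫ y in Set.Icc (a ∘ i.succAbove) (b ∘ i.succAbove), f (i.insertNth (a i) y) i) = 0 := by
  have hae : (fun x => divergence (fderiv ℝ f x)) =ᵐ[volume.restrict (Set.Icc a b)] 0 := by
    have hbox : Set.univ.pi (fun i => Set.Ioo (a i) (b i)) =ᵐ[volume] Set.Icc a b := by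
      rw [volume_pi]; exact Measure.univ_pi_Ioo_ae_eq_Icc
    rw [Measure.restrict_congr_set hbox.symm]
    exact (ae_restrict_mem (MeasurableSet.univ_pi fun _ => measurableSet_Ioo)).mono hdiv
  rw [← integral_divergence_of_hasFDerivAt_off_countable a b hab f (fderiv ℝ f) ∅
    Set.countable_empty hc (fun x hx => (hd x hx.1).hasFDerivAt)
    ((integrable_zero _ _ _).congr hae.symm)]
  exact (integral_congr_ae hae).trans (integral_zero _ _)

end Divergence

def wedgeCoords : (Fin 3 → ℝ) ≃L[ℝ] (Fin 3 → ℝ) :=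
  LinearEquiv.toContinuousLinearEquiv
    { toFun := fun y => ![y 2, y 2 - y 0, y 2 + y 1]
      invFun := fun p => ![p 0 - p 1, p 2 - p 0, p 0]
      map_add' := fun y y' => by ext i; fin_cases i <;> simp <;> ring
      map_smul' := fun c y => by ext i; fin_cases i <;> simp <;> ring
      left_inv := fun y => by ext i; fin_cases i <;> simp
      right_inv := fun p => by ext i; fin_cases i <;> simp }

@[simp] lemma wedgeCoords_apply (y : Fin 3 → ℝ) :
    wedgeCoords y = ![y 2, y 2 - y 0, y 2 + y 1] := rfl

lemma det_wedgeCoords :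
    LinearMap.det (wedgeCoords : (Fin 3 → ℝ) →ₗ[ℝ] (Fin 3 → ℝ)) = -1 := by
  rw [← LinearMap.det_toMatrix', Matrix.det_fin_three]
  simp [LinearMap.toMatrix'_apply]

lemma measurePreserving_wedgeCoords : MeasurePreserving wedgeCoords := by
  refine ⟨wedgeCoords.continuous.measurable, ?_⟩
  have h := Real.map_linearMap_volume_pi_eq_smul_volume_pi
    (f := (wedgeCoords : (Fin 3 → ℝ) →ₗ[ℝ] (Fin 3 → ℝ))) (by rw [det_wedgeCoords]; norm_num)
  rw [det_wedgeCoords] at h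
  simpa using h

lemma norm_le_two_mul_norm_wedgeCoords (y : Fin 3 → ℝ) : ‖y‖ ≤ 2 * ‖wedgeCoords y‖ := by
  have h : ∀ i, |wedgeCoords y i| ≤ ‖wedgeCoords y‖ := fun i => norm_le_pi_norm (wedgeCoords y) i
  simp only [wedgeCoords_apply] at h
  refine pi_norm_le_iff_of_nonneg (by positivity) |>.2 fun i => ?_
  have h0 := abs_le.1 (h 0)
  have h1 := abs_le.1 (h 1)
  have h2 := abs_le.1 (h 2)
  simp only [Matrix.cons_val] at h0 h1 h2
  rw [Real.norm_eq_abs, abs_le]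
  fin_cases i <;> simp <;> constructor <;> linarith

lemma mem_S1_wedgeCoords_iff {y : Fin 3 → ℝ} : wedgeCoords y ∈ S1 ↔ 0 < y 0 ∧ 0 < y 1 := by
  simp [S1]

lemma wedgeCoords_mem_closure_S1 {y : Fin 3 → ℝ} (h0 : 0 ≤ y 0) (h1 : 0 ≤ y 1) :
    wedgeCoords y ∈ closure S1 := by
  have hlim : Filter.Tendsto (fun ε : ℝ => wedgeCoords (y + ε • ![1, 1, 0]))
      (nhdsWithin 0 (Set.Ioi 0)) (nhds (wedgeCoords y)) := by
    refine tendsto_nhdsWithin_of_tendsto_nhds ?_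
    have : Continuous fun ε : ℝ => wedgeCoords (y + ε • ![1, 1, 0]) := by fun_prop
    simpa using this.tendsto 0
  refine mem_closure_of_tendsto hlim (eventually_nhdsWithin_of_forall fun ε (hε : 0 < ε) => ?_)
  rw [mem_S1_wedgeCoords_iff]
  simp only [Pi.add_apply, Pi.smul_apply, smul_eq_mul, Matrix.cons_val]
  constructor <;> linarith

lemma setIntegral_S1_eq_setIntegral_box {f : (Fin 3 → ℝ) → ℝ} {R A : ℝ} (hA : 2 * R < A)
    (hf : ∀ p, R < ‖p‖ → f p = 0) :
    ∫ p in S1, f p = ∫ y in Set.Icc ![0, 0, -A] ![A, A, A], f (wedgeCoords y) := by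
  have hpre : wedgeCoords ⁻¹' S1 = {y | 0 < y 0 ∧ 0 < y 1} :=
    Set.ext fun y => mem_S1_wedgeCoords_iff
  have hQ : MeasurableSet {y : Fin 3 → ℝ | 0 < y 0 ∧ 0 < y 1} :=
    (measurableSet_lt measurable_const (measurable_pi_apply 0)).inter
      (measurableSet_lt measurable_const (measurable_pi_apply 1))
  have hbox : Set.univ.pi (fun i => Set.Ioo (![0, 0, -A] i) (![A, A, A] i))
      =ᵐ[volume] Set.Icc ![0, 0, -A] ![A, A, A] := by
    rw [volume_pi]; exact Measure.univ_pi_Ioo_ae_eq_Icc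
  rw [← measurePreserving_wedgeCoords.setIntegral_preimage_emb
    wedgeCoords.toHomeomorph.measurableEmbedding, hpre, ← setIntegral_congr_set hbox]
  refine setIntegral_eq_of_subset_of_forall_sdiff_eq_zero hQ (fun y hy => ?_) fun y hy => ?_
  · exact ⟨(hy 0 trivial).1, (hy 1 trivial).1⟩
  · obtain ⟨⟨hy₀, hy₁⟩, hy⟩ := hy
    refine hf _ ?_
    suffices A ≤ ‖y‖ by linarith [norm_le_two_mul_norm_wedgeCoords y]
    simp only [Set.mem_univ_pi, not_forall] at hy
    obtain ⟨i, hi⟩ := hy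
    have hyi := norm_le_pi_norm y i
    rw [Real.norm_eq_abs] at hyi
    fin_cases i <;> simp at hi hyi
    · linarith [hi hy₀, le_abs_self (y 0)]
    · linarith [hi hy₁, le_abs_self (y 1)]
    · by_cases h : -A < y 2
      · linarith [hi h, le_abs_self (y 2)]
      · linarith [neg_abs_le (y 2)]

def spacetimeCoords : (Fin 4 → ℝ) →L[ℝ] (Fin 4 → ℝ) :=
  LinearMap.toContinuousLinearMap
    { toFun := fun z => pt (z 0) (wedgeCoords (Fin.tail z))
      map_add' := fun z z' => by ext i; fin_cases i <;> simp [pt, Fin.tail] <;> ring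
      map_smul' := fun c z => by ext i; fin_cases i <;> simp [pt, Fin.tail] <;> ring }

local notation "Φ" => spacetimeCoords

lemma spacetimeCoords_apply (z : Fin 4 → ℝ) : Φ z = pt (z 0) (wedgeCoords (Fin.tail z)) := rfl

lemma spacetimeCoords_cons (τ : ℝ) (y : Fin 3 → ℝ) :
    Φ (Fin.cons τ y) = pt τ (wedgeCoords y) := rfl

lemma spacetimeCoords_insertNth_one_zero (y : Fin 3 → ℝ) :
    Φ (Fin.insertNth 1 0 y) = ![y 0, y 2, y 2, y 2 + y 1] := by
  ext i; fin_cases i <;> simp [spacetimeCoords_apply, pt, Fin.tail] <;> rfl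

lemma spacetimeCoords_insertNth_two_zero (y : Fin 3 → ℝ) :
    Φ (Fin.insertNth 2 0 y) = ![y 0, y 2, y 2 - y 1, y 2] := by
  ext i; fin_cases i <;> simp [spacetimeCoords_apply, pt, Fin.tail] <;> rfl

lemma isOpen_S1 : IsOpen S1 :=
  (isOpen_lt (continuous_apply 1) (continuous_apply 0)).inter
    (isOpen_lt (continuous_apply 0) (continuous_apply 2))

lemma continuous_sp : Continuous sp := by
  unfold sp; fun_prop

lemma sp_pt (t : ℝ) (p : Fin 3 → ℝ) : sp (pt t p) = p := by
  ext i; fin_cases i <;> rfl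

lemma spacetimeCoords_mem_closure_domain {z : Fin 4 → ℝ} (h0 : 0 ≤ z 0) (h1 : 0 ≤ z 1)
    (h2 : 0 ≤ z 2) : 0 ≤ Φ z 0 ∧ sp (Φ z) ∈ closure S1 :=
  ⟨h0, by rw [spacetimeCoords_apply, sp_pt]; exact wedgeCoords_mem_closure_S1 h1 h2⟩

lemma spacetimeCoords_mem_domain {z : Fin 4 → ℝ} (h0 : 0 < z 0) (h1 : 0 < z 1) (h2 : 0 < z 2) :
    0 < Φ z 0 ∧ sp (Φ z) ∈ S1 :=
  ⟨h0, by rw [spacetimeCoords_apply, sp_pt, mem_S1_wedgeCoords_iff]; exact ⟨h1, h2⟩⟩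

lemma closure_domain_mem_nhds {x : Fin 4 → ℝ} (hx : 0 < x 0 ∧ sp x ∈ S1) :
    {x : Fin 4 → ℝ | 0 ≤ x 0 ∧ sp x ∈ closure S1} ∈ nhds x := by
  have hopen : IsOpen {x : Fin 4 → ℝ | 0 < x 0 ∧ sp x ∈ S1} :=
    (isOpen_lt continuous_const (continuous_apply 0)).inter (isOpen_S1.preimage continuous_sp)
  exact Filter.mem_of_superset (hopen.mem_nhds hx) fun y hy => ⟨hy.1.le, subset_closure hy.2⟩

def fluxDir (ς₀ ς₁ ς₂ : ℝ) : Fin 4 → ℝ := ![1, ς₁ - ς₀, ς₀ - ς₂, -ς₀]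

lemma fluxDir_one (ς₀ ς₁ ς₂ : ℝ) : fluxDir ς₀ ς₁ ς₂ 1 = ς₁ - ς₀ := rfl

lemma fluxDir_two (ς₀ ς₁ ς₂ : ℝ) : fluxDir ς₀ ς₁ ς₂ 2 = ς₀ - ς₂ := rfl

lemma spacetimeCoords_fluxDir (ς₀ ς₁ ς₂ : ℝ) :
    Φ (fluxDir ς₀ ς₁ ς₂) = ![1, -ς₀, -ς₁, -ς₂] := by
  ext i; fin_cases i <;> simp [spacetimeCoords_apply, pt, fluxDir] <;> ring

lemma fderiv_apply_characteristic {x : Fin 4 → ℝ} {f : (Fin 4 → ℝ) → ℂ} (ς₀ ς₁ ς₂ : ℝ) :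
    fderiv ℝ f x ![1, -ς₀, -ς₁, -ς₂] =
      pdC 0 f x - ς₀ * pdC 1 f x - ς₁ * pdC 2 f x - ς₂ * pdC 3 f x := by
  have h : (![1, -ς₀, -ς₁, -ς₂] : Fin 4 → ℝ) = Pi.single 0 1 - ς₀ • Pi.single 1 1
      - ς₁ • Pi.single 2 1 - ς₂ • Pi.single 3 1 := by
    ext i; fin_cases i <;> simp
  simp [h, pdC, Complex.real_smul]

lemma inner_I_mul_antisymm (ω : ℝ) (v w : ℂ) :
    inner ℝ v (I * ω * w) = -inner ℝ w (I * ω * v) := by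
  simp only [Complex.inner, mul_re, mul_im, I_re, I_im, ofReal_re, ofReal_im, conj_re, conj_im]
  ring

lemma sum_inner_mass_eq_zero (ω : ℝ) (u : ℝ → ℝ → ℝ → ℂ) :
    ∑ ς₀ ∈ 𝕊, ∑ ς₁ ∈ 𝕊, ∑ ς₂ ∈ 𝕊,
      inner ℝ (u ς₀ ς₁ ς₂) (I * ω * (u ς₀ (-ς₁) ς₂ + u ς₀ ς₁ (-ς₂))) = 0 := by
  have flip₁ : ∀ ς₀ ς₂, ∑ ς₁ ∈ 𝕊, inner ℝ (u ς₀ ς₁ ς₂) (I * ω * u ς₀ (-ς₁) ς₂) = 0 :=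
    fun ς₀ ς₂ => sum_signs_eq_zero_of_antisymm
      (fun a b => inner ℝ (u ς₀ a ς₂) (I * ω * u ς₀ b ς₂)) fun _ _ => inner_I_mul_antisymm ω _ _
  have flip₂ : ∀ ς₀ ς₁, ∑ ς₂ ∈ 𝕊, inner ℝ (u ς₀ ς₁ ς₂) (I * ω * u ς₀ ς₁ (-ς₂)) = 0 :=
    fun ς₀ ς₁ => sum_signs_eq_zero_of_antisymm
      (fun a b => inner ℝ (u ς₀ ς₁ a) (I * ω * u ς₀ ς₁ b)) fun _ _ => inner_I_mul_antisymm ω _ _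
  simp only [mul_add, inner_add_right, Finset.sum_add_distrib, flip₂, add_zero]
  exact Finset.sum_eq_zero fun ς₀ _ => by
    rw [Finset.sum_comm]; simp only [flip₁, Finset.sum_const_zero]

section Flux

variable {ψ : ℝ → ℝ → ℝ → (Fin 4 → ℝ) → ℂ}

def flux (ψ : ℝ → ℝ → ℝ → (Fin 4 → ℝ) → ℂ) (z : Fin 4 → ℝ) : Fin 4 → ℝ :=
  ∑ ς₀ ∈ 𝕊, ∑ ς₁ ∈ 𝕊, ∑ ς₂ ∈ 𝕊, ‖ψ ς₀ ς₁ ς₂ (Φ z)‖ ^ 2 • fluxDir ς₀ ς₁ ς₂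

lemma flux_apply (z : Fin 4 → ℝ) (i : Fin 4) :
    flux ψ z i = ∑ ς₀ ∈ 𝕊, ∑ ς₁ ∈ 𝕊, ∑ ς₂ ∈ 𝕊, fluxDir ς₀ ς₁ ς₂ i * ‖ψ ς₀ ς₁ ς₂ (Φ z)‖ ^ 2 := by
  simp [flux, Finset.sum_apply, mul_comm]

lemma continuousOn_flux {s T : Set (Fin 4 → ℝ)}
    (hψ : ∀ ς₀ ∈ ({-1, 1} : Set ℝ), ∀ ς₁ ∈ ({-1, 1} : Set ℝ), ∀ ς₂ ∈ ({-1, 1} : Set ℝ),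
      ContinuousOn (ψ ς₀ ς₁ ς₂) T) (hs : Set.MapsTo Φ s T) :
    ContinuousOn (flux ψ) s := by
  unfold flux
  refine continuousOn_finsetSum _ fun ς₀ h₀ => continuousOn_finsetSum _ fun ς₁ h₁ =>
    continuousOn_finsetSum _ fun ς₂ h₂ => ?_
  exact (((hψ ς₀ (mem_set_of_mem_signs h₀) ς₁ (mem_set_of_mem_signs h₁) ς₂
    (mem_set_of_mem_signs h₂)).comp spacetimeCoords.continuous.continuousOn hs).norm.pow 2).smul
    continuousOn_const

lemma hasFDerivAt_flux {z : Fin 4 → ℝ}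
    (hψ : ∀ ς₀ ∈ ({-1, 1} : Set ℝ), ∀ ς₁ ∈ ({-1, 1} : Set ℝ), ∀ ς₂ ∈ ({-1, 1} : Set ℝ),
      DifferentiableAt ℝ (ψ ς₀ ς₁ ς₂) (Φ z)) :
    HasFDerivAt (flux ψ) (∑ ς₀ ∈ 𝕊, ∑ ς₁ ∈ 𝕊, ∑ ς₂ ∈ 𝕊,
      (2 • (innerSL ℝ (ψ ς₀ ς₁ ς₂ (Φ z))).comp
        ((fderiv ℝ (ψ ς₀ ς₁ ς₂) (Φ z)).comp Φ)).smulRight (fluxDir ς₀ ς₁ ς₂)) z := by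
  unfold flux
  refine HasFDerivAt.fun_sum fun ς₀ h₀ => HasFDerivAt.fun_sum fun ς₁ h₁ =>
    HasFDerivAt.fun_sum fun ς₂ h₂ => HasFDerivAt.smul_const ?_ _
  exact ((hψ ς₀ (mem_set_of_mem_signs h₀) ς₁ (mem_set_of_mem_signs h₁) ς₂
    (mem_set_of_mem_signs h₂)).hasFDerivAt.comp z spacetimeCoords.hasFDerivAt).norm_sq

lemma divergence_fderiv_flux_eq_zero {ω : ℝ} {z : Fin 4 → ℝ}
    (hψ : ∀ ς₀ ∈ ({-1, 1} : Set ℝ), ∀ ς₁ ∈ ({-1, 1} : Set ℝ), ∀ ς₂ ∈ ({-1, 1} : Set ℝ),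
      DifferentiableAt ℝ (ψ ς₀ ς₁ ς₂) (Φ z))
    (hpde : ∀ ς₀ ∈ ({-1, 1} : Set ℝ), ∀ ς₁ ∈ ({-1, 1} : Set ℝ), ∀ ς₂ ∈ ({-1, 1} : Set ℝ),
      pdC 0 (ψ ς₀ ς₁ ς₂) (Φ z) - (ς₀ : ℂ) * pdC 1 (ψ ς₀ ς₁ ς₂) (Φ z)
        - (ς₁ : ℂ) * pdC 2 (ψ ς₀ ς₁ ς₂) (Φ z) - (ς₂ : ℂ) * pdC 3 (ψ ς₀ ς₁ ς₂) (Φ z)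
        + I * (ω : ℂ) * ψ ς₀ (-ς₁) ς₂ (Φ z) + I * (ω : ℂ) * ψ ς₀ ς₁ (-ς₂) (Φ z) = 0) :
    divergence (fderiv ℝ (flux ψ) z) = 0 := by
  rw [(hasFDerivAt_flux hψ).fderiv]
  simp only [divergence_sum, divergence_smulRight, _root_.smul_apply,
    ContinuousLinearMap.comp_apply, innerSL_apply_apply, spacetimeCoords_fluxDir,
    fderiv_apply_characteristic]
  have hchar : ∀ ς₀ ∈ 𝕊, ∀ ς₁ ∈ 𝕊, ∀ ς₂ ∈ 𝕊,
      pdC 0 (ψ ς₀ ς₁ ς₂) (Φ z) - (ς₀ : ℂ) * pdC 1 (ψ ς₀ ς₁ ς₂) (Φ z)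
        - (ς₁ : ℂ) * pdC 2 (ψ ς₀ ς₁ ς₂) (Φ z) - (ς₂ : ℂ) * pdC 3 (ψ ς₀ ς₁ ς₂) (Φ z)
        = -(I * ω * (ψ ς₀ (-ς₁) ς₂ (Φ z) + ψ ς₀ ς₁ (-ς₂) (Φ z))) := fun ς₀ h₀ ς₁ h₁ ς₂ h₂ => by
    linear_combination hpde ς₀ (mem_set_of_mem_signs h₀) ς₁ (mem_set_of_mem_signs h₁) ς₂
      (mem_set_of_mem_signs h₂)
  rw [Finset.sum_congr rfl fun ς₀ h₀ => Finset.sum_congr rfl fun ς₁ h₁ =>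
    Finset.sum_congr rfl fun ς₂ h₂ => by rw [hchar ς₀ h₀ ς₁ h₁ ς₂ h₂]]
  simp only [inner_neg_right, smul_neg, Finset.sum_neg_distrib, ← Finset.smul_sum,
    sum_inner_mass_eq_zero, smul_zero, neg_zero]

lemma sum_integral_faces_flux_eq_zero {ω : ℝ}
    (hreg : ∀ ς₀ ∈ ({-1, 1} : Set ℝ), ∀ ς₁ ∈ ({-1, 1} : Set ℝ), ∀ ς₂ ∈ ({-1, 1} : Set ℝ),
      ContDiffOn ℝ 1 (ψ ς₀ ς₁ ς₂) {x : Fin 4 → ℝ | 0 ≤ x 0 ∧ sp x ∈ closure S1})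
    (heq : ∀ ς₀ ∈ ({-1, 1} : Set ℝ), ∀ ς₁ ∈ ({-1, 1} : Set ℝ), ∀ ς₂ ∈ ({-1, 1} : Set ℝ),
      ∀ x : Fin 4 → ℝ, 0 < x 0 → sp x ∈ S1 →
        pdC 0 (ψ ς₀ ς₁ ς₂) x - (ς₀ : ℂ) * pdC 1 (ψ ς₀ ς₁ ς₂) x
          - (ς₁ : ℂ) * pdC 2 (ψ ς₀ ς₁ ς₂) x - (ς₂ : ℂ) * pdC 3 (ψ ς₀ ς₁ ς₂) x
          + I * (ω : ℂ) * ψ ς₀ (-ς₁) ς₂ x + I * (ω : ℂ) * ψ ς₀ ς₁ (-ς₂) x = 0)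
    {a b : Fin 4 → ℝ} (hab : a ≤ b) (ha₀ : 0 ≤ a 0) (ha₁ : 0 ≤ a 1) (ha₂ : 0 ≤ a 2) :
    ∑ i, ((∫ y in Set.Icc (a ∘ i.succAbove) (b ∘ i.succAbove), flux ψ (i.insertNth (b i) y) i) -
      ∫ y in Set.Icc (a ∘ i.succAbove) (b ∘ i.succAbove), flux ψ (i.insertNth (a i) y) i) = 0 := by
  have hdomain : ∀ z ∈ Set.univ.pi fun i => Set.Ioo (a i) (b i), 0 < Φ z 0 ∧ sp (Φ z) ∈ S1 :=
    fun z hz => spacetimeCoords_mem_domain (ha₀.trans_lt (hz 0 trivial).1)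
      (ha₁.trans_lt (hz 1 trivial).1) (ha₂.trans_lt (hz 2 trivial).1)
  have hdiff : ∀ z ∈ Set.univ.pi fun i => Set.Ioo (a i) (b i),
      ∀ ς₀ ∈ ({-1, 1} : Set ℝ), ∀ ς₁ ∈ ({-1, 1} : Set ℝ), ∀ ς₂ ∈ ({-1, 1} : Set ℝ),
        DifferentiableAt ℝ (ψ ς₀ ς₁ ς₂) (Φ z) := fun z hz ς₀ h₀ ς₁ h₁ ς₂ h₂ =>
    ((hreg ς₀ h₀ ς₁ h₁ ς₂ h₂).differentiableOn one_ne_zero).differentiableAt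
      (closure_domain_mem_nhds (hdomain z hz))
  refine sum_integral_faces_eq_zero_of_divergence_eq_zero hab ?_
    (fun z hz => (hasFDerivAt_flux (hdiff z hz)).differentiableAt)
    fun z hz => divergence_fderiv_flux_eq_zero (hdiff z hz)
      fun ς₀ h₀ ς₁ h₁ ς₂ h₂ => heq ς₀ h₀ ς₁ h₁ ς₂ h₂ _ (hdomain z hz).1 (hdomain z hz).2
  exact continuousOn_flux (fun ς₀ h₀ ς₁ h₁ ς₂ h₂ => (hreg ς₀ h₀ ς₁ h₁ ς₂ h₂).continuousOn)
    fun z hz => spacetimeCoords_mem_closure_domain (ha₀.trans (hz.1 0)) (ha₁.trans (hz.1 1))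
      (ha₂.trans (hz.1 2))

lemma flux_insertNth_zero_apply_zero (τ : ℝ) (y : Fin 3 → ℝ) :
    flux ψ (Fin.insertNth 0 τ y) 0 = totD ψ τ (wedgeCoords y) := by
  simp [flux_apply, Fin.insertNth_zero', spacetimeCoords_cons, fluxDir, totD]

end Flux

section Boundary

variable {ψ : ℝ → ℝ → ℝ → (Fin 4 → ℝ) → ℂ}

def VanishesOutsideBall (ψ : ℝ → ℝ → ℝ → (Fin 4 → ℝ) → ℂ) (t R : ℝ) : Prop :=
  ∀ ς₀ ∈ ({-1, 1} : Set ℝ), ∀ ς₁ ∈ ({-1, 1} : Set ℝ), ∀ ς₂ ∈ ({-1, 1} : Set ℝ),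
    ∀ s ∈ Set.Icc 0 t, ∀ p : Fin 3 → ℝ, R < ‖p‖ → ψ ς₀ ς₁ ς₂ (pt s p) = 0

lemma exists_vanishesOutsideBall
    (hsupp : ∀ T : ℝ, ∃ K : Set (Fin 3 → ℝ), IsCompact K ∧
      ∀ ς₀ ∈ ({-1, 1} : Set ℝ), ∀ ς₁ ∈ ({-1, 1} : Set ℝ), ∀ ς₂ ∈ ({-1, 1} : Set ℝ),
        ∀ t ∈ Set.Icc 0 T, ∀ p : Fin 3 → ℝ, p ∉ K → ψ ς₀ ς₁ ς₂ (pt t p) = 0) (t : ℝ) :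
    ∃ R, 0 < R ∧ VanishesOutsideBall ψ t R := by
  obtain ⟨K, hK, hψK⟩ := hsupp t
  obtain ⟨R, hR, hKR⟩ := hK.isBounded.subset_closedBall_lt 0 0
  refine ⟨R, hR, fun ς₀ h₀ ς₁ h₁ ς₂ h₂ s hs p hp => hψK ς₀ h₀ ς₁ h₁ ς₂ h₂ s hs p fun hpK => ?_⟩
  have := mem_closedBall_zero_iff.1 (hKR hpK)
  linarith

namespace VanishesOutsideBall

variable {t R : ℝ}

lemma totD_eq_zero (h : VanishesOutsideBall ψ t R) {s : ℝ} (hs : s ∈ Set.Icc 0 t)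
    {p : Fin 3 → ℝ} (hp : R < ‖p‖) :
    totD ψ s p = 0 :=
  Finset.sum_eq_zero fun ς₀ h₀ => Finset.sum_eq_zero fun ς₁ h₁ => Finset.sum_eq_zero
    fun ς₂ h₂ => by
      rw [h ς₀ (mem_set_of_mem_signs h₀) ς₁ (mem_set_of_mem_signs h₁) ς₂
        (mem_set_of_mem_signs h₂) s hs p hp, norm_zero, zero_pow two_ne_zero]

lemma flux_eq_zero (h : VanishesOutsideBall ψ t R) {z : Fin 4 → ℝ} (hz₀ : z 0 ∈ Set.Icc 0 t)
    (hz : 2 * R < ‖Fin.tail z‖) :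
    flux ψ z = 0 := by
  have hfar : R < ‖wedgeCoords (Fin.tail z)‖ := by
    linarith [norm_le_two_mul_norm_wedgeCoords (Fin.tail z)]
  refine Finset.sum_eq_zero fun ς₀ h₀ => Finset.sum_eq_zero fun ς₁ h₁ =>
    Finset.sum_eq_zero fun ς₂ h₂ => ?_
  rw [spacetimeCoords_apply, h ς₀ (mem_set_of_mem_signs h₀) ς₁ (mem_set_of_mem_signs h₁) ς₂
    (mem_set_of_mem_signs h₂) _ hz₀ _ hfar, norm_zero, zero_pow two_ne_zero, zero_smul]

lemma integral_flux_face_eq_zero (h : VanishesOutsideBall ψ t R) {a b : Fin 4 → ℝ}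
    (ha : a 0 = 0) (hb : b 0 = t) {i : Fin 4} (hi : i ≠ 0) {c : ℝ} (hc : 2 * R < |c|) :
    ∫ y in Set.Icc (a ∘ i.succAbove) (b ∘ i.succAbove), flux ψ (i.insertNth c y) i = 0 := by
  refine setIntegral_eq_zero_of_forall_eq_zero fun y hy => ?_
  obtain ⟨j, rfl⟩ := Fin.exists_succ_eq.2 hi
  have htime : Fin.insertNth (α := fun _ => ℝ) j.succ c y 0 = y 0 := by
    rw [← Fin.succ_succAbove_zero j, Fin.insertNth_apply_succAbove]
  have hfar : |c| ≤ ‖Fin.tail (Fin.insertNth (α := fun _ => ℝ) j.succ c y)‖ := by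
    simpa [Fin.tail] using
      norm_le_pi_norm (Fin.tail (Fin.insertNth (α := fun _ => ℝ) j.succ c y)) j
  rw [h.flux_eq_zero ?_ (hc.trans_le hfar), Pi.zero_apply]
  have h0 := hy.1 0
  have h1 := hy.2 0
  simp only [Function.comp_apply, Fin.succ_succAbove_zero, ha, hb] at h0 h1
  exact htime ▸ ⟨h0, h1⟩

end VanishesOutsideBall

lemma flux_insertNth_one_zero_apply_one {θ₁ : ℝ}
    (hbc1 : ∀ ς₂ ∈ ({-1, 1} : Set ℝ), ∀ t : ℝ, 0 ≤ t → ∀ r b : ℝ, r < b →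
      ψ (-1) 1 ς₂ ![t, r, r, b] = exp (θ₁ * I) * ψ 1 (-1) ς₂ ![t, r, r, b])
    {y : Fin 3 → ℝ} (hy₀ : 0 ≤ y 0) (hy₁ : 0 < y 1) :
    flux ψ (Fin.insertNth 1 0 y) 1 = 0 := by
  have hr : y 2 < y 2 + y 1 := by linarith
  simp only [flux_apply, spacetimeCoords_insertNth_one_zero, fluxDir_one, sum_signs]
  rw [hbc1 (-1) (by simp) _ hy₀ _ _ hr, hbc1 1 (by simp) _ hy₀ _ _ hr]
  simp only [norm_mul, norm_exp_ofReal_mul_I, one_mul]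
  ring

lemma flux_insertNth_two_zero_apply_two {θ₂ : ℝ}
    (hbc2 : ∀ ς₁ ∈ ({-1, 1} : Set ℝ), ∀ t : ℝ, 0 ≤ t → ∀ a r : ℝ, a < r →
      ψ 1 ς₁ (-1) ![t, r, a, r] = exp (θ₂ * I) * ψ (-1) ς₁ 1 ![t, r, a, r])
    {y : Fin 3 → ℝ} (hy₀ : 0 ≤ y 0) (hy₁ : 0 < y 1) :
    flux ψ (Fin.insertNth 2 0 y) 2 = 0 := by
  have hr : y 2 - y 1 < y 2 := by linarith
  simp only [flux_apply, spacetimeCoords_insertNth_two_zero, fluxDir_two, sum_signs]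
  rw [hbc2 (-1) (by simp) _ hy₀ _ _ hr, hbc2 1 (by simp) _ hy₀ _ _ hr]
  simp only [norm_mul, norm_exp_ofReal_mul_I, one_mul]
  ring

lemma ae_apply_ne_zero {n : ℕ} (j : Fin n) : ∀ᵐ y : Fin n → ℝ, y j ≠ 0 := by
  rw [volume_pi]; exact Measure.ae_eval_ne (fun _ => volume) j 0

lemma integral_flux_face_one_eq_zero {θ₁ : ℝ}
    (hbc1 : ∀ ς₂ ∈ ({-1, 1} : Set ℝ), ∀ t : ℝ, 0 ≤ t → ∀ r b : ℝ, r < b →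
      ψ (-1) 1 ς₂ ![t, r, r, b] = exp (θ₁ * I) * ψ 1 (-1) ς₂ ![t, r, r, b])
    {a b : Fin 4 → ℝ} (ha₀ : 0 ≤ a 0) (ha₁ : a 1 = 0) (ha₂ : 0 ≤ a 2) :
    ∫ y in Set.Icc (a ∘ Fin.succAbove 1) (b ∘ Fin.succAbove 1),
      flux ψ (Fin.insertNth 1 (a 1) y) 1 = 0 := by
  refine setIntegral_eq_zero_of_ae_eq_zero ?_
  -- `y 1 = 0` is the edge `s_e1 = s_ph = s_e2`, where no boundary condition is imposed.
  filter_upwards [ae_apply_ne_zero 1] with y hy₁ hy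
  have h₀ := hy.1 0
  have h₁ := hy.1 1
  simp only [Function.comp_apply] at h₀ h₁
  rw [ha₁]
  exact flux_insertNth_one_zero_apply_one hbc1 (ha₀.trans h₀) ((ha₂.trans h₁).lt_of_ne' hy₁)

lemma integral_flux_face_two_eq_zero {θ₂ : ℝ}
    (hbc2 : ∀ ς₁ ∈ ({-1, 1} : Set ℝ), ∀ t : ℝ, 0 ≤ t → ∀ a r : ℝ, a < r →
      ψ 1 ς₁ (-1) ![t, r, a, r] = exp (θ₂ * I) * ψ (-1) ς₁ 1 ![t, r, a, r])
    {a b : Fin 4 → ℝ} (ha₀ : 0 ≤ a 0) (ha₁ : 0 ≤ a 1) (ha₂ : a 2 = 0) :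
    ∫ y in Set.Icc (a ∘ Fin.succAbove 2) (b ∘ Fin.succAbove 2),
      flux ψ (Fin.insertNth 2 (a 2) y) 2 = 0 := by
  refine setIntegral_eq_zero_of_ae_eq_zero ?_
  filter_upwards [ae_apply_ne_zero 1] with y hy₁ hy
  have h₀ := hy.1 0
  have h₁ := hy.1 1
  simp only [Function.comp_apply] at h₀ h₁
  rw [ha₂]
  exact flux_insertNth_two_zero_apply_two hbc2 (ha₀.trans h₀) ((ha₁.trans h₁).lt_of_ne' hy₁)

end Boundary

theorem exact_probability_conservation
    (ω : ℝ)
    (θ₁ θ₂ : ℝ)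
    (ψ : ℝ → ℝ → ℝ → (Fin 4 → ℝ) → ℂ)
    -- `Ψ` is C¹ on `[0,∞) × closure S₁`
    (hreg : ∀ ς₀ ∈ ({-1, 1} : Set ℝ), ∀ ς₁ ∈ ({-1, 1} : Set ℝ), ∀ ς₂ ∈ ({-1, 1} : Set ℝ),
      ContDiffOn ℝ 1 (ψ ς₀ ς₁ ς₂) {x : Fin 4 → ℝ | 0 ≤ x 0 ∧ sp x ∈ closure S1})
    -- equal-time evolution equations on `(0,∞) × S₁`
    (heq : ∀ ς₀ ∈ ({-1, 1} : Set ℝ), ∀ ς₁ ∈ ({-1, 1} : Set ℝ), ∀ ς₂ ∈ ({-1, 1} : Set ℝ),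
      ∀ x : Fin 4 → ℝ, 0 < x 0 → sp x ∈ S1 →
        pdC 0 (ψ ς₀ ς₁ ς₂) x - (ς₀ : ℂ) * pdC 1 (ψ ς₀ ς₁ ς₂) x
          - (ς₁ : ℂ) * pdC 2 (ψ ς₀ ς₁ ς₂) x - (ς₂ : ℂ) * pdC 3 (ψ ς₀ ς₁ ς₂) x
          + Complex.I * (ω : ℂ) * ψ ς₀ (-ς₁) ς₂ x
          + Complex.I * (ω : ℂ) * ψ ς₀ ς₁ (-ς₂) x = 0)
    -- exact boundary condition on `C₁ = {s_e1 = s_ph < s_e2}`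
    (hbc1 : ∀ ς₂ ∈ ({-1, 1} : Set ℝ), ∀ t : ℝ, 0 ≤ t → ∀ r b : ℝ, r < b →
      ψ (-1) 1 ς₂ ![t, r, r, b]
        = Complex.exp (θ₁ * Complex.I) * ψ 1 (-1) ς₂ ![t, r, r, b])
    -- exact boundary condition on `C₂ = {s_e1 < s_ph = s_e2}`
    (hbc2 : ∀ ς₁ ∈ ({-1, 1} : Set ℝ), ∀ t : ℝ, 0 ≤ t → ∀ a r : ℝ, a < r →
      ψ 1 ς₁ (-1) ![t, r, a, r]
        = Complex.exp (θ₂ * Complex.I) * ψ (-1) ς₁ 1 ![t, r, a, r])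
    -- compact spatial support on every bounded time interval
    (hsupp : ∀ T : ℝ, ∃ K : Set (Fin 3 → ℝ), IsCompact K ∧
      ∀ ς₀ ∈ ({-1, 1} : Set ℝ), ∀ ς₁ ∈ ({-1, 1} : Set ℝ), ∀ ς₂ ∈ ({-1, 1} : Set ℝ),
        ∀ t ∈ Set.Icc 0 T, ∀ p : Fin 3 → ℝ, p ∉ K → ψ ς₀ ς₁ ς₂ (pt t p) = 0) :
    ∀ t : ℝ, 0 ≤ t →
      (∫ p in S1, totD ψ t p) = ∫ p in S1, totD ψ 0 p := by
  intro t ht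
  obtain ⟨R, hR, hψR⟩ := exists_vanishesOutsideBall hsupp t
  set A := 2 * R + 1
  have hA : 2 * R < A := by linarith
  have hfar : 2 * R < |A| ∧ 2 * R < |-A| := by
    rw [abs_neg, abs_of_pos (by linarith)]; exact ⟨hA, hA⟩
  have hfaces := sum_integral_faces_flux_eq_zero hreg heq (a := ![0, 0, 0, -A])
    (b := ![t, A, A, A]) (fun i => by fin_cases i <;> simp <;> linarith) le_rfl le_rfl le_rfl
  rw [Fin.sum_univ_four, integral_flux_face_one_eq_zero hbc1 le_rfl rfl le_rfl,
    integral_flux_face_two_eq_zero hbc2 le_rfl le_rfl rfl] at hfaces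
  simp only [Matrix.cons_val] at hfaces
  rw [hψR.integral_flux_face_eq_zero (i := 1) rfl rfl (by decide) hfar.1,
    hψR.integral_flux_face_eq_zero (i := 2) rfl rfl (by decide) hfar.1,
    hψR.integral_flux_face_eq_zero (i := 3) rfl rfl (by decide) hfar.1,
    hψR.integral_flux_face_eq_zero (i := 3) rfl rfl (by decide) hfar.2] at hfaces
  have htail (x : ℝ) (v : Fin 3 → ℝ) : Matrix.vecCons x v ∘ Fin.succ = v := Fin.cons_comp_succ x v
  simp only [flux_insertNth_zero_apply_zero, Fin.succAbove_zero, htail, sub_zero, add_zero]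
    at hfaces
  rw [setIntegral_S1_eq_setIntegral_box hA fun p hp => hψR.totD_eq_zero ⟨ht, le_rfl⟩ hp,
    setIntegral_S1_eq_setIntegral_box hA fun p hp => hψR.totD_eq_zero ⟨le_rfl, ht⟩ hp]
  linarith
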